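/- arXiv:2510.03273 — 3 statements merged into one kernel-verified Lean document; each statement's English description precedes it below -/
import Mathlib

section
/- With the recursion p_i(k) ∝ p_{i-1}(k)^(1−α)·p_y(k)^α starting from full-support p₀, the sequence p_i converges pointwise to p_y as i → ∞. -/
open Finset Real Filter

noncomputable def KL {m : ℕ} (p q : Fin m → ℝ) : ℝ := ∑ k, p k * Real.log (p k / q k)

def IsDist {m : ℕ} (p : Fin m → ℝ) : Prop := (∀ k, 0 < p k) ∧ ∑ k, p k = 1

theorem stmt3 {m : ℕ} (p0 py : Fin m → ℝ) (h0 : IsDist p0) (hy : IsDist py)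
    (α : ℝ) (hα : α ∈ Set.Ioo (0:ℝ) 1)
    (p : ℕ → Fin m → ℝ) (hbase : p 0 = p0)
    (hrec : ∀ i k, p (i + 1) k =
      (p i k) ^ (1 - α) * (py k) ^ α / (∑ j, (p i j) ^ (1 - α) * (py j) ^ α)) :
    ∀ k, Filter.Tendsto (fun i => p i k) Filter.atTop (nhds (py k)) := by
  intro k0
  have hne : (Finset.univ : Finset (Fin m)).Nonempty := ⟨k0, Finset.mem_univ k0⟩
  obtain ⟨hα0, hα1⟩ := hα
  set β := 1 - α with hβ
  have hβ0 : 0 < β := by simp only [hβ]; linarith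
  have hβ1 : β < 1 := by simp only [hβ]; linarith
  have hp0 := h0.1
  have hpy := hy.1
  set f : ℕ → Fin m → ℝ := fun i k => p0 k ^ (β ^ i) * py k ^ (1 - β ^ i) with hf
  have hfpos : ∀ i k, 0 < f i k := fun i k =>
    mul_pos (Real.rpow_pos_of_pos (hp0 k) _) (Real.rpow_pos_of_pos (hpy k) _)
  have hSpos : ∀ i, 0 < ∑ j, f i j := fun i =>
    Finset.sum_pos (fun j _ => hfpos i j) hne
  have hkey : ∀ i k, f i k ^ β * py k ^ α = f (i + 1) k := by
    intro i k
    simp only [hf]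
    rw [Real.mul_rpow (Real.rpow_pos_of_pos (hp0 k) _).le
        (Real.rpow_pos_of_pos (hpy k) _).le,
      ← Real.rpow_mul (hp0 k).le, ← Real.rpow_mul (hpy k).le,
      mul_assoc, ← Real.rpow_add (hpy k)]
    congr 1
    rw [pow_succ]
    congr 1
    linear_combination hβ
  have hform : ∀ i k, p i k = f i k / ∑ j, f i j := by
    intro i
    induction i with
    | zero =>
      intro k
      have hf0 : ∀ k, f 0 k = p0 k := by
        intro k
        simp [hf]
      simp only [hf0, hbase, h0.2, div_one]
    | succ i ih =>
      intro k
      have hS := hSpos i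
      have hterm : ∀ j, (f i j / ∑ j', f i j') ^ β * py j ^ α
          = f (i + 1) j / (∑ j', f i j') ^ β := by
        intro j
        rw [Real.div_rpow (hfpos i j).le hS.le, div_mul_eq_mul_div, hkey i j]
      rw [hrec]
      simp only [ih, hterm, ← Finset.sum_div]
      have hSβ : (0:ℝ) < (∑ j', f i j') ^ β := Real.rpow_pos_of_pos hS _
      have hT := hSpos (i + 1)
      field_simp
  have hb : Tendsto (fun i => β ^ i) atTop (nhds 0) :=
    tendsto_pow_atTop_nhds_zero_of_lt_one hβ0.le hβ1
  have hflim : ∀ k, Tendsto (fun i => f i k) atTop (nhds (py k)) := by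
    intro k
    have h1 : Tendsto (fun i => p0 k ^ (β ^ i)) atTop (nhds (p0 k ^ (0:ℝ))) :=
      Filter.Tendsto.rpow tendsto_const_nhds hb (Or.inl (hp0 k).ne')
    have h2 : Tendsto (fun i => py k ^ (1 - β ^ i)) atTop (nhds (py k ^ (1 - (0:ℝ)))) :=
      Filter.Tendsto.rpow tendsto_const_nhds (tendsto_const_nhds.sub hb)
        (Or.inl (hpy k).ne')
    have := h1.mul h2
    simpa [hf] using this
  have hsum : Tendsto (fun i => ∑ j, f i j) atTop (nhds 1) := by
    have := tendsto_finset_sum (Finset.univ : Finset (Fin m))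
      (fun j _ => hflim j)
    rwa [hy.2] at this
  have := (hflim k0).div hsum one_ne_zero
  rw [div_one] at this
  simp only [hform]
  exact this
end

section
/- In the exact SID cascade starting from uniform p₀ on {1,…,m} with one-hot-smoothed target p_y, the probability assigned to the most likely class of p_y is nondecreasing in i: if p_y(k*) = max_k p_y(k), then p_i(k*) is a nondecreasing sequence. -/
open Finset Real Filter

theorem stmt15 {m : ℕ} (hm : 1 ≤ m) (py : Fin m → ℝ) (hy : IsDist py)
    (α : ℝ) (hα : α ∈ Set.Ioo (0:ℝ) 1)
    (kstar : Fin m) (hmax : ∀ k, k ≠ kstar → py k < py kstar)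
    (p0 : Fin m → ℝ) (h0 : ∀ k, p0 k = 1 / m)
    (p : ℕ → Fin m → ℝ)
    (hp : ∀ i k, p i k =
      (p0 k) ^ ((1 - α) ^ i) * (py k) ^ (1 - (1 - α) ^ i)
        / (∑ j, (p0 j) ^ ((1 - α) ^ i) * (py j) ^ (1 - (1 - α) ^ i))) :
    Monotone (fun i => p i kstar) := by
  obtain ⟨hα0, hα1⟩ := hα
  have hb0 : (0:ℝ) < 1 - α := by linarith
  have hb1 : (1:ℝ) - α < 1 := by linarith
  have hpy := hy.1
  have hks : 0 < py kstar := hpy kstar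
  have hne : Nonempty (Fin m) := ⟨⟨0, hm⟩⟩
  have hmpos : (0:ℝ) < (1:ℝ) / m := by
    have : (0:ℝ) < (m:ℝ) := by exact_mod_cast hm
    positivity
  -- key formula
  have key : ∀ n : ℕ, p n kstar = 1 / ∑ j, (py j / py kstar) ^ (1 - (1-α)^n) := by
    intro n
    set s : ℝ := 1 - (1-α)^n with hs
    have hcpos : (0:ℝ) < ((1:ℝ)/m) ^ ((1-α)^n) := Real.rpow_pos_of_pos hmpos _
    have h1 : ∀ j : Fin m, (p0 j) ^ ((1-α)^n) * (py j) ^ s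
        = ((1:ℝ)/m) ^ ((1-α)^n) * (py j) ^ s := by
      intro j; rw [h0]
    have hsum : ∑ j, (p0 j) ^ ((1-α)^n) * (py j) ^ s
        = ((1:ℝ)/m) ^ ((1-α)^n) * ∑ j, (py j) ^ s := by
      rw [Finset.sum_congr rfl (fun j _ => h1 j), ← Finset.mul_sum]
    have hsum2 : ∑ j, (py j / py kstar) ^ s = (∑ j, (py j) ^ s) / (py kstar) ^ s := by
      rw [Finset.sum_div]
      refine Finset.sum_congr rfl (fun j _ => ?_)
      rw [Real.div_rpow (le_of_lt (hpy j)) (le_of_lt hks)]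
    rw [hp, hsum, h0, hsum2, one_div_div]
    rw [mul_div_mul_left _ _ (ne_of_gt hcpos)]
  apply monotone_nat_of_le_succ
  intro i
  rw [key i, key (i+1)]
  have hSpos : 0 < ∑ j, (py j / py kstar) ^ (1 - (1-α)^(i+1)) := by
    apply Finset.sum_pos (fun j _ => Real.rpow_pos_of_pos (div_pos (hpy j) hks) _)
      Finset.univ_nonempty
  apply one_div_le_one_div_of_le hSpos
  refine Finset.sum_le_sum (fun j _ => ?_)
  have hrpos : 0 < py j / py kstar := div_pos (hpy j) hks
  have hr1 : py j / py kstar ≤ 1 := by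
    rw [div_le_one hks]
    by_cases hj : j = kstar
    · rw [hj]
    · exact le_of_lt (hmax j hj)
  have hexp : 1 - (1-α)^i ≤ 1 - (1-α)^(i+1) := by
    have := pow_le_pow_of_le_one (le_of_lt hb0) (le_of_lt hb1) (show i ≤ i+1 by omega)
    linarith
  exact Real.rpow_le_rpow_of_exponent_ge hrpos hr1 hexp
end

section
/- In the exact cascade p_i(k) ∝ p₀(k)^((1−α)^i)·p_y(k)^(1−(1−α)^i) with full-support p₀ and p_y, the KL divergence KL(p_i‖p_y) tends to 0 as i → ∞. -/
open Finset Real Filter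

theorem stmt19 {m : ℕ} (p0 py : Fin m → ℝ) (h0 : IsDist p0) (hy : IsDist py)
    (α : ℝ) (hα : α ∈ Set.Ioo (0:ℝ) 1)
    (p : ℕ → Fin m → ℝ)
    (hp : ∀ i k, p i k =
      (p0 k) ^ ((1 - α) ^ i) * (py k) ^ (1 - (1 - α) ^ i)
        / (∑ j, (p0 j) ^ ((1 - α) ^ i) * (py j) ^ (1 - (1 - α) ^ i))) :
    Filter.Tendsto (fun i => KL (p i) py) Filter.atTop (nhds 0) := by
  obtain ⟨h0p, h0s⟩ := h0
  obtain ⟨hyp, hys⟩ := hy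
  obtain ⟨hα1, hα2⟩ := hα
  have he : Tendsto (fun i : ℕ => (1 - α)^i) atTop (nhds 0) :=
    tendsto_pow_atTop_nhds_zero_of_lt_one (by linarith) (by linarith)
  -- for each k, numerator tends to py k
  have hnum : ∀ k, Tendsto (fun i => (p0 k) ^ ((1 - α) ^ i) * (py k) ^ (1 - (1 - α) ^ i))
      atTop (nhds (py k)) := by
    intro k
    have h1 : Tendsto (fun i => (p0 k) ^ ((1 - α) ^ i)) atTop (nhds 1) := by
      have := (continuousAt_const_rpow (a := p0 k) (b := 0) (h0p k).ne').tendsto.comp he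
      simpa [Function.comp_def, Real.rpow_zero] using this
    have h2 : Tendsto (fun i => (py k) ^ (1 - (1 - α) ^ i)) atTop (nhds (py k)) := by
      have ht : Tendsto (fun i : ℕ => 1 - (1 - α)^i) atTop (nhds 1) := by
        simpa using (tendsto_const_nhds (x := (1:ℝ))).sub he
      have := (continuousAt_const_rpow (a := py k) (b := 1) (hyp k).ne').tendsto.comp ht
      simpa [Function.comp_def, Real.rpow_one] using this
    simpa using h1.mul h2
  have hden : Tendsto (fun i => ∑ j, (p0 j) ^ ((1 - α) ^ i) * (py j) ^ (1 - (1 - α) ^ i))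
      atTop (nhds 1) := by
    have := tendsto_finset_sum (univ : Finset (Fin m)) (fun j _ => hnum j)
    rwa [hys] at this
  have hpk : ∀ k, Tendsto (fun i => p i k) atTop (nhds (py k)) := by
    intro k
    have := (hnum k).div hden one_ne_zero
    simp only [div_one] at this
    refine this.congr fun i => ?_
    rw [Pi.div_apply, hp i k]
  have hterm : ∀ k, Tendsto (fun i => p i k * Real.log (p i k / py k)) atTop (nhds 0) := by
    intro k
    have hlog : Tendsto (fun i => Real.log (p i k / py k)) atTop (nhds 0) := by
      have hd : Tendsto (fun i => p i k / py k) atTop (nhds 1) := by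
        have := (hpk k).div tendsto_const_nhds (hyp k).ne'
        simpa [div_self (hyp k).ne', Pi.div_def] using this
      have := (Real.continuousAt_log one_ne_zero).tendsto.comp hd
      simpa [Function.comp_def, Real.log_one] using this
    simpa using (hpk k).mul hlog
  have : Tendsto (fun i => ∑ k, p i k * Real.log (p i k / py k)) atTop (nhds 0) := by
    have := tendsto_finset_sum (univ : Finset (Fin m)) (fun k _ => hterm k)
    simpa using this
  simpa [KL] using this
end
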